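/- Let n be a multiple of 6 and let τ, φ be two Hamilton paths of K_n in the same filter class. Then the union of τ and φ contains no 4-cycle that is the union of a single edge of τ and a subpath of three consecutive edges of φ. -/
import Mathlib


/-- The edges of the subpath of the Hamilton path `τ` consisting of the (at most `k`)
consecutive edges starting at position `i`. -/
def consecEdges (n : ℕ) (τ : Equiv.Perm (Fin n)) (i k : ℕ) : Set (Sym2 (Fin n)) :=
  {e | ∃ j : ℕ, ∃ h : j + 1 < n, i ≤ j ∧ j < i + k ∧ e = s(τ ⟨j, by omega⟩, τ ⟨j + 1, h⟩)}

/-- `C` is the edge set of a cycle of length four. -/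
def IsFourCycle (n : ℕ) (C : Set (Sym2 (Fin n))) : Prop :=
  ∃ a b c d : Fin n, a ≠ b ∧ a ≠ c ∧ a ≠ d ∧ b ≠ c ∧ b ≠ d ∧ c ≠ d ∧
    C = {s(a, b), s(b, c), s(c, d), s(d, a)}

/-- The position (in `Fin n`) of the `r`-th element (`r : Fin 2`) of the `p`-th glued pair
of positions `(2p, 2p+1)`. -/
def pairPos (n : ℕ) (p : Fin (n / 2)) (r : Fin 2) : Fin n :=
  ⟨2 * p.val + r.val, by have := p.isLt; have := r.isLt; omega⟩

/-- Two permutations `τ, φ` of `[n]` (viewed as sequences) are in the same filter class: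
`φ` is obtained from `τ` by permuting the glued pairs via a permutation `g` of the pair
indices preserving each pair's role (opening / middle / concluding, i.e. the index mod 3)
and preserving each pair's internal order. -/
def SameFilterClass (n : ℕ) (τ φ : Equiv.Perm (Fin n)) : Prop :=
  ∃ g : Equiv.Perm (Fin (n / 2)),
    (∀ p, (g p).val % 3 = p.val % 3) ∧
    ∀ (p : Fin (n / 2)) (r : Fin 2), φ (pairPos n p r) = τ (pairPos n (g p) r)

/-- Auxiliary: edge `e` of the union carries tag `t`: tag `3` for the single `τ`-edge,
tags `0,1,2` for the three consecutive `φ`-edges. -/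
def TagProp (n : ℕ) (τ φ : Equiv.Perm (Fin n)) (i j t : ℕ) (e : Sym2 (Fin n)) : Prop :=
  (t = 3 ∧ ∃ (h0 : i < n) (h1 : i + 1 < n), e = s(τ ⟨i, h0⟩, τ ⟨i + 1, h1⟩)) ∨
  (t < 3 ∧ ∃ (h0 : j + t < n) (h1 : j + t + 1 < n),
      e = s(φ ⟨j + t, h0⟩, φ ⟨j + t + 1, h1⟩))

lemma tagprop_inj {n : ℕ} {τ φ : Equiv.Perm (Fin n)} {i j t : ℕ} {e e' : Sym2 (Fin n)}
    (h : TagProp n τ φ i j t e) (h' : TagProp n τ φ i j t e') : e = e' := by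
  rcases h with ⟨h3, h0, h1, rfl⟩ | ⟨ht, h0, h1, rfl⟩ <;>
    rcases h' with ⟨h3', h0', h1', rfl⟩ | ⟨ht', h0', h1', rfl⟩
  · rfl
  · omega
  · omega
  · rfl

lemma tag_exists {n : ℕ} {τ φ : Equiv.Perm (Fin n)} {i j : ℕ} {e : Sym2 (Fin n)}
    (h : e ∈ consecEdges n τ i 1 ∪ consecEdges n φ j 3) :
    ∃ t, t ≤ 3 ∧ TagProp n τ φ i j t e := by
  simp only [consecEdges, Set.mem_union, Set.mem_setOf_eq] at h
  rcases h with ⟨jj, hjn, hj1, hj2, rfl⟩ | ⟨jj, hjn, hj1, hj2, rfl⟩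
  · have hji : jj = i := by omega
    subst hji
    exact ⟨3, le_refl 3, Or.inl ⟨rfl, by omega, hjn, rfl⟩⟩
  · obtain ⟨t, rfl⟩ : ∃ t, jj = j + t := ⟨jj - j, by omega⟩
    exact ⟨t, by omega, Or.inr ⟨by omega, by omega, hjn, rfl⟩⟩

lemma extract_edge {n : ℕ} {τ φ : Equiv.Perm (Fin n)} {i j t : ℕ} {e : Sym2 (Fin n)}
    {C : Set (Sym2 (Fin n))} (hT : TagProp n τ φ i j t e) (he : e ∈ C) (ht : t ≠ 3) :
    ∃ (h0 : j + t < n) (h1 : j + t + 1 < n), s(φ ⟨j + t, h0⟩, φ ⟨j + t + 1, h1⟩) ∈ C := by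
  rcases hT with ⟨h3, _⟩ | ⟨_, h0, h1, heq⟩
  · exact absurd h3 ht
  · exact ⟨h0, h1, heq ▸ he⟩

lemma four_cycle_deg {α : Type*} {a b c d v : α} {e : Sym2 α}
    (hab : a ≠ b) (hac : a ≠ c) (had : a ≠ d) (hbc : b ≠ c) (hbd : b ≠ d) (hcd : c ≠ d)
    (he : e ∈ ({s(a,b), s(b,c), s(c,d), s(d,a)} : Set (Sym2 α))) (hv : v ∈ e) :
    ∃ e' ∈ ({s(a,b), s(b,c), s(c,d), s(d,a)} : Set (Sym2 α)), e' ≠ e ∧ v ∈ e' := by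
  simp only [Set.mem_insert_iff, Set.mem_singleton_iff] at he
  rcases he with rfl | rfl | rfl | rfl <;> rw [Sym2.mem_iff] at hv <;> rcases hv with rfl | rfl
  · exact ⟨s(d,v), by simp, by intro hx; rw [Sym2.eq_iff] at hx; obtain ⟨h1, h2⟩ | ⟨h1, h2⟩ := hx <;> simp_all, by simp⟩
  · exact ⟨s(v,c), by simp, by intro hx; rw [Sym2.eq_iff] at hx; obtain ⟨h1, h2⟩ | ⟨h1, h2⟩ := hx <;> simp_all, by simp⟩
  · exact ⟨s(a,v), by simp, by intro hx; rw [Sym2.eq_iff] at hx; obtain ⟨h1, h2⟩ | ⟨h1, h2⟩ := hx <;> simp_all, by simp⟩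
  · exact ⟨s(v,d), by simp, by intro hx; rw [Sym2.eq_iff] at hx; obtain ⟨h1, h2⟩ | ⟨h1, h2⟩ := hx <;> simp_all, by simp⟩
  · exact ⟨s(b,v), by simp, by intro hx; rw [Sym2.eq_iff] at hx; obtain ⟨h1, h2⟩ | ⟨h1, h2⟩ := hx <;> simp_all, by simp⟩
  · exact ⟨s(v,a), by simp, by intro hx; rw [Sym2.eq_iff] at hx; obtain ⟨h1, h2⟩ | ⟨h1, h2⟩ := hx <;> simp_all, by simp⟩
  · exact ⟨s(c,v), by simp, by intro hx; rw [Sym2.eq_iff] at hx; obtain ⟨h1, h2⟩ | ⟨h1, h2⟩ := hx <;> simp_all, by simp⟩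
  · exact ⟨s(v,b), by simp, by intro hx; rw [Sym2.eq_iff] at hx; obtain ⟨h1, h2⟩ | ⟨h1, h2⟩ := hx <;> simp_all, by simp⟩

/-- If `n` is a multiple of 6 and the Hamilton paths `τ` and `φ` of `K_n` lie in the same
filter class, then their union contains no 4-cycle which is the union of a single edge of
`τ` and a subpath of three consecutive edges of `φ`. -/
theorem no_one_three_four_cycle_in_same_filter_class (n : ℕ) (hn : 6 ∣ n)
    (τ φ : Equiv.Perm (Fin n)) (hclass : SameFilterClass n τ φ) :
    ¬ ∃ C : Set (Sym2 (Fin n)), IsFourCycle n C ∧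
        ∃ i j : ℕ, C = consecEdges n τ i 1 ∪ consecEdges n φ j 3 := by
  rintro ⟨C, ⟨a, b, c, d, hab, hac, had, hbc, hbd, hcd, hC⟩, i, j, hU⟩
  obtain ⟨g, hg3, hgφ⟩ := hclass
  have h2 : 2 ∣ n := dvd_trans (by norm_num) hn
  have hn2 : 2 * (n / 2) = n := Nat.mul_div_cancel' h2
  have hmem : ∀ e ∈ C, ∃ t, t ≤ 3 ∧ TagProp n τ φ i j t e := fun e he =>
    tag_exists (hU ▸ he)
  have hE0 : s(a,b) ∈ C := by rw [hC]; simp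
  have hE1 : s(b,c) ∈ C := by rw [hC]; simp
  have hE2 : s(c,d) ∈ C := by rw [hC]; simp
  have hE3 : s(d,a) ∈ C := by rw [hC]; simp
  obtain ⟨t0, ht0, hT0⟩ := hmem _ hE0
  obtain ⟨t1, ht1, hT1⟩ := hmem _ hE1
  obtain ⟨t2, ht2, hT2⟩ := hmem _ hE2
  obtain ⟨t3, ht3, hT3⟩ := hmem _ hE3
  have hd01 : s(a,b) ≠ s(b,c) := by
    intro hx; rw [Sym2.eq_iff] at hx; obtain ⟨h1, h2⟩ | ⟨h1, h2⟩ := hx <;> simp_all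
  have hd02 : s(a,b) ≠ s(c,d) := by
    intro hx; rw [Sym2.eq_iff] at hx; obtain ⟨h1, h2⟩ | ⟨h1, h2⟩ := hx <;> simp_all
  have hd03 : s(a,b) ≠ s(d,a) := by
    intro hx; rw [Sym2.eq_iff] at hx; obtain ⟨h1, h2⟩ | ⟨h1, h2⟩ := hx <;> simp_all
  have hd12 : s(b,c) ≠ s(c,d) := by
    intro hx; rw [Sym2.eq_iff] at hx; obtain ⟨h1, h2⟩ | ⟨h1, h2⟩ := hx <;> simp_all
  have hd13 : s(b,c) ≠ s(d,a) := by
    intro hx; rw [Sym2.eq_iff] at hx; obtain ⟨h1, h2⟩ | ⟨h1, h2⟩ := hx <;> simp_all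
  have hd23 : s(c,d) ≠ s(d,a) := by
    intro hx; rw [Sym2.eq_iff] at hx; obtain ⟨h1, h2⟩ | ⟨h1, h2⟩ := hx <;> simp_all
  have hne01 : t0 ≠ t1 := fun h => hd01 (tagprop_inj hT0 (by rw [h]; exact hT1))
  have hne02 : t0 ≠ t2 := fun h => hd02 (tagprop_inj hT0 (by rw [h]; exact hT2))
  have hne03 : t0 ≠ t3 := fun h => hd03 (tagprop_inj hT0 (by rw [h]; exact hT3))
  have hne12 : t1 ≠ t2 := fun h => hd12 (tagprop_inj hT1 (by rw [h]; exact hT2))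
  have hne13 : t1 ≠ t3 := fun h => hd13 (tagprop_inj hT1 (by rw [h]; exact hT3))
  have hne23 : t2 ≠ t3 := fun h => hd23 (tagprop_inj hT2 (by rw [h]; exact hT3))
  -- all four tags are attained; extract the first and last φ-edges
  have hval0 : t0 = 0 ∨ t1 = 0 ∨ t2 = 0 ∨ t3 = 0 := by omega
  have hval2 : t0 = 2 ∨ t1 = 2 ∨ t2 = 2 ∨ t3 = 2 := by omega
  have he0 : ∃ (h0 : j + 0 < n) (h1 : j + 0 + 1 < n),
      s(φ ⟨j + 0, h0⟩, φ ⟨j + 0 + 1, h1⟩) ∈ C := by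
    rcases hval0 with h | h | h | h <;> subst h
    · exact extract_edge hT0 hE0 (by omega)
    · exact extract_edge hT1 hE1 (by omega)
    · exact extract_edge hT2 hE2 (by omega)
    · exact extract_edge hT3 hE3 (by omega)
  have he2 : ∃ (h0 : j + 2 < n) (h1 : j + 2 + 1 < n),
      s(φ ⟨j + 2, h0⟩, φ ⟨j + 2 + 1, h1⟩) ∈ C := by
    rcases hval2 with h | h | h | h <;> subst h
    · exact extract_edge hT0 hE0 (by omega)
    · exact extract_edge hT1 hE1 (by omega)
    · exact extract_edge hT2 hE2 (by omega)
    · exact extract_edge hT3 hE3 (by omega)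
  obtain ⟨hj0, hj1, he0C⟩ := he0
  obtain ⟨hj2', hj3, he2C⟩ := he2
  -- the degree-2 argument: the τ-edge joins φ(j) and φ(j+3)
  have key0 : ∃ (hi0 : i < n) (hi1 : i + 1 < n),
      φ ⟨j + 0, hj0⟩ = τ ⟨i, hi0⟩ ∨ φ ⟨j + 0, hj0⟩ = τ ⟨i + 1, hi1⟩ := by
    obtain ⟨e', he'set, he'ne, hv'⟩ :=
      four_cycle_deg hab hac had hbc hbd hcd (hC ▸ he0C) (Sym2.mem_mk_left _ _)
    rw [← hC] at he'set
    obtain ⟨t, htle, hT⟩ := hmem _ he'set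
    rcases hT with ⟨h3, hi0, hi1, rfl⟩ | ⟨htlt, k0, k1, rfl⟩
    · rw [Sym2.mem_iff] at hv'
      exact ⟨hi0, hi1, hv'⟩
    · rw [Sym2.mem_iff] at hv'
      rcases hv' with h | h
      · have h' := φ.injective h
        rw [Fin.mk.injEq] at h'
        have ht0' : t = 0 := by omega
        subst ht0'
        exact absurd rfl he'ne
      · have h' := φ.injective h
        rw [Fin.mk.injEq] at h'
        omega
  have key3 : ∃ (hi0 : i < n) (hi1 : i + 1 < n),
      φ ⟨j + 2 + 1, hj3⟩ = τ ⟨i, hi0⟩ ∨ φ ⟨j + 2 + 1, hj3⟩ = τ ⟨i + 1, hi1⟩ := by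
    obtain ⟨e', he'set, he'ne, hv'⟩ :=
      four_cycle_deg hab hac had hbc hbd hcd (hC ▸ he2C) (Sym2.mem_mk_right _ _)
    rw [← hC] at he'set
    obtain ⟨t, htle, hT⟩ := hmem _ he'set
    rcases hT with ⟨h3, hi0, hi1, rfl⟩ | ⟨htlt, k0, k1, rfl⟩
    · rw [Sym2.mem_iff] at hv'
      exact ⟨hi0, hi1, hv'⟩
    · rw [Sym2.mem_iff] at hv'
      rcases hv' with h | h
      · have h' := φ.injective h
        rw [Fin.mk.injEq] at h'
        omega
      · have h' := φ.injective h
        rw [Fin.mk.injEq] at h'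
        have ht2' : t = 2 := by omega
        subst ht2'
        exact absurd rfl he'ne
  obtain ⟨hi0, hi1, hk0⟩ := key0
  obtain ⟨hi0', hi1', hk3⟩ := key3
  -- translate positions of φ into positions of τ
  have hσ : ∀ (m : ℕ) (hm : m < n), ∃ q : Fin (n / 2), q.val = m / 2 ∧
      ∃ hlt : 2 * (g q).val + m % 2 < n, φ ⟨m, hm⟩ = τ ⟨2 * (g q).val + m % 2, hlt⟩ := by
    intro m hm
    refine ⟨⟨m / 2, by omega⟩, rfl, ?_, ?_⟩
    · have := (g ⟨m / 2, by omega⟩).isLt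
      omega
    · have hm' : (⟨m, hm⟩ : Fin n) = pairPos n ⟨m / 2, by omega⟩ ⟨m % 2, by omega⟩ := by
        apply Fin.ext
        simp [pairPos]
        omega
      rw [hm', hgφ]
      rfl
  obtain ⟨qj, hqj, hltj, hφj⟩ := hσ (j + 0) hj0
  obtain ⟨q3, hq3, hlt3, hφ3⟩ := hσ (j + 2 + 1) hj3
  have hABne : (g qj).val ≠ (g q3).val := by
    intro h
    have : qj = q3 := g.injective (Fin.val_injective h)
    rw [Fin.ext_iff] at this
    omega
  have hφne : φ (⟨j + 0, hj0⟩ : Fin n) ≠ φ ⟨j + 2 + 1, hj3⟩ := by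
    intro h
    have h' := φ.injective h
    rw [Fin.mk.injEq] at h'
    omega
  have hg3j := hg3 qj
  have hg3j3 := hg3 q3
  rw [hφj] at hk0
  rw [hφ3] at hk3
  have hkey : (i = 2 * (g qj).val + (j + 0) % 2 ∧ i + 1 = 2 * (g q3).val + (j + 2 + 1) % 2) ∨
      (i = 2 * (g q3).val + (j + 2 + 1) % 2 ∧ i + 1 = 2 * (g qj).val + (j + 0) % 2) := by
    rcases hk0 with h | h <;> rcases hk3 with h' | h'
    · exfalso
      exact hφne (by rw [hφj, hφ3, h, h'])
    · left
      constructor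
      · have := τ.injective h
        rw [Fin.mk.injEq] at this
        omega
      · have := τ.injective h'
        rw [Fin.mk.injEq] at this
        omega
    · right
      constructor
      · have := τ.injective h'
        rw [Fin.mk.injEq] at this
        omega
      · have := τ.injective h
        rw [Fin.mk.injEq] at this
        omega
    · exfalso
      exact hφne (by rw [hφj, hφ3, h, h'])
  omega
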